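/- arXiv:1010.5052 — 2 statements merged into one kernel-verified Lean document; each statement's English description precedes it below -/
import Mathlib

section
/- Let V be a real inner product space of dimension 4n with inner product g, equipped with a hyperhermitian structure (J₁,J₂,J₃). Let T be a 3-form on V which is of type (1,2)+(2,1) with respect to each of J₁, J₂, J₃ and satisfies the mixed type identity, let (e_a)_{a=1}^{4n} be an orthonormal basis of V, and let A be the difference tensor defined by 2A(X,Y,Z) = −T(X,J₁Y,J₁Z) − T(J₁X,J₁Y,Z) − T(X,J₃Y,J₃Z) − T(J₁X,J₃Y,J₂Z). Then for every X ∈ V, ∑_{a=1}^{4n} A(X,e_a,J₃e_a) = 0. -/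
/-!
Substituting `Z = J₃ Y` in the defining formula of `A` and using the quaternion relations, the
two terms starting with `T (J₁ X)` cancel, leaving `2 A(X, Y, J₃ Y) = T(X, J₁ Y, J₂ Y) - T(X, Y, J₃ Y)`.
Since `J₃ J₁ = J₂`, the first term is the second one evaluated at `J₁ Y`; summed over an orthonormal
basis the two traces agree, because `J₁ e` is again an orthonormal basis.
-/

open scoped RealInnerProductSpace

section

variable {V : Type*} [NormedAddCommGroup V] [InnerProductSpace ℝ V]

theorem OrthonormalBasis.sum_apply_self_eq {ι κ : Type*} [Fintype ι] [Fintype κ]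
    (e : OrthonormalBasis ι ℝ V) (f : OrthonormalBasis κ ℝ V) (B : V →ₗ[ℝ] V →ₗ[ℝ] ℝ) :
    ∑ a, B (f a) (f a) = ∑ b, B (e b) (e b) := by
  calc ∑ a, B (f a) (f a)
      = ∑ a, ∑ b, B (⟪f a, e b⟫ • f a) (e b) := by
        refine Finset.sum_congr rfl fun a _ => ?_
        nth_rw 2 [← e.sum_repr' (f a)]
        simp only [map_sum, map_smul, LinearMap.smul_apply, smul_eq_mul, real_inner_comm]
    _ = ∑ b, B (∑ a, ⟪f a, e b⟫ • f a) (e b) := by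
        rw [Finset.sum_comm]
        simp only [map_sum, LinearMap.sum_apply]
    _ = ∑ b, B (e b) (e b) := by simp only [f.sum_repr']

noncomputable def LinearMap.isometryEquivOfSqEqNeg (J : V →ₗ[ℝ] V) (hsq : ∀ X, J (J X) = -X)
    (hiso : ∀ X Y, ⟪J X, J Y⟫ = ⟪X, Y⟫) : V ≃ₗᵢ[ℝ] V :=
  (LinearEquiv.ofLinearMap J (-J) (by ext; simp [hsq]) (by ext; simp [hsq])).isometryOfInner hiso

theorem OrthonormalBasis.sum_apply_map_self_eq {ι : Type*} [Fintype ι]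
    (e : OrthonormalBasis ι ℝ V) (B : V →ₗ[ℝ] V →ₗ[ℝ] ℝ) (J : V →ₗ[ℝ] V)
    (hsq : ∀ X, J (J X) = -X) (hiso : ∀ X Y, ⟪J X, J Y⟫ = ⟪X, Y⟫) :
    ∑ a, B (J (e a)) (J (e a)) = ∑ a, B (e a) (e a) :=
  e.sum_apply_self_eq (e.map (J.isometryEquivOfSqEqNeg hsq hiso)) B

section Quaternion

variable {J₁ J₂ J₃ : V →ₗ[ℝ] V}

theorem J₁_J₃_eq (hJ₁sq : ∀ X, J₁ (J₁ X) = -X) (hJ₁₂ : ∀ X, J₁ (J₂ X) = J₃ X) (Y : V) :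
    J₁ (J₃ Y) = -(J₂ Y) := by
  rw [← hJ₁₂, hJ₁sq]

theorem J₃_J₁_eq (hJ₁sq : ∀ X, J₁ (J₁ X) = -X) (hJ₁₂ : ∀ X, J₁ (J₂ X) = J₃ X)
    (hJ₂₁ : ∀ X, J₂ (J₁ X) = -(J₃ X)) (Y : V) : J₃ (J₁ Y) = J₂ Y := by
  rw [← hJ₁₂, hJ₂₁, map_neg, J₁_J₃_eq hJ₁sq hJ₁₂, neg_neg]

theorem J₂_J₃_eq (hJ₂sq : ∀ X, J₂ (J₂ X) = -X) (hJ₁₂ : ∀ X, J₁ (J₂ X) = J₃ X)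
    (hJ₂₁ : ∀ X, J₂ (J₁ X) = -(J₃ X)) (Y : V) : J₂ (J₃ Y) = J₁ Y := by
  rw [← hJ₁₂, hJ₂₁, ← hJ₁₂, hJ₂sq, map_neg, neg_neg]

variable (hJ₁sq : ∀ X, J₁ (J₁ X) = -X) (hJ₁₂ : ∀ X, J₁ (J₂ X) = J₃ X)
  (hJ₂₁ : ∀ X, J₂ (J₁ X) = -(J₃ X)) {T : V →ₗ[ℝ] V →ₗ[ℝ] V →ₗ[ℝ] ℝ}
include hJ₁sq hJ₁₂ hJ₂₁

theorem two_mul_apply_J₃_eq (hJ₂sq : ∀ X, J₂ (J₂ X) = -X) (hJ₃sq : ∀ X, J₃ (J₃ X) = -X)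
    (halt₂ : ∀ X Y Z, T X Y Z = -(T X Z Y)) {A : V → V → V → ℝ}
    (hA : ∀ X Y Z, 2 * A X Y Z =
      -(T X (J₁ Y) (J₁ Z)) - T (J₁ X) (J₁ Y) Z - T X (J₃ Y) (J₃ Z) - T (J₁ X) (J₃ Y) (J₂ Z))
    (X Y : V) : 2 * A X Y (J₃ Y) = T X (J₁ Y) (J₂ Y) - T X Y (J₃ Y) := by
  rw [hA, J₁_J₃_eq hJ₁sq hJ₁₂, J₂_J₃_eq hJ₂sq hJ₁₂ hJ₂₁, hJ₃sq, halt₂ (J₁ X) (J₃ Y),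
    halt₂ X (J₃ Y)]
  simp only [map_neg, LinearMap.neg_apply]
  ring

theorem OrthonormalBasis.sum_apply_J₁_J₂_eq {ι : Type*} [Fintype ι] (e : OrthonormalBasis ι ℝ V)
    (hJ₁iso : ∀ X Y, ⟪J₁ X, J₁ Y⟫ = ⟪X, Y⟫) (X : V) :
    ∑ a, T X (J₁ (e a)) (J₂ (e a)) = ∑ a, T X (e a) (J₃ (e a)) := by
  simpa only [LinearMap.compl₂_apply, J₃_J₁_eq hJ₁sq hJ₁₂ hJ₂₁] using
    e.sum_apply_map_self_eq ((T X).compl₂ J₃) J₁ hJ₁sq hJ₁iso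

end Quaternion

end

theorem stmt_5_general
    {V : Type*} [NormedAddCommGroup V] [InnerProductSpace ℝ V]
    {n : ℕ}
    (J₁ J₂ J₃ : V →ₗ[ℝ] V)
    (hJ₁iso : ∀ X Y : V, ⟪J₁ X, J₁ Y⟫ = ⟪X, Y⟫)
    (hJ₁sq : ∀ X : V, J₁ (J₁ X) = -X)
    (hJ₂sq : ∀ X : V, J₂ (J₂ X) = -X)
    (hJ₃sq : ∀ X : V, J₃ (J₃ X) = -X)
    (hJ₁₂ : ∀ X : V, J₁ (J₂ X) = J₃ X)
    (hJ₂₁ : ∀ X : V, J₂ (J₁ X) = -(J₃ X))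
    (T : V →ₗ[ℝ] V →ₗ[ℝ] V →ₗ[ℝ] ℝ)
    (halt₂ : ∀ X Y Z : V, T X Y Z = -(T X Z Y))
    (e : OrthonormalBasis (Fin (4 * n)) ℝ V)
    (A : V → V → V → ℝ)
    (hA : ∀ X Y Z : V,
      2 * A X Y Z =
        -(T X (J₁ Y) (J₁ Z)) - T (J₁ X) (J₁ Y) Z - T X (J₃ Y) (J₃ Z) - T (J₁ X) (J₃ Y) (J₂ Z))
    (X : V) :
    ∑ a, A X (e a) (J₃ (e a)) = 0 := by
  have htwice : 2 * ∑ a, A X (e a) (J₃ (e a))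
      = ∑ a, T X (J₁ (e a)) (J₂ (e a)) - ∑ a, T X (e a) (J₃ (e a)) := by
    rw [Finset.mul_sum, ← Finset.sum_sub_distrib]
    exact Finset.sum_congr rfl fun a _ =>
      two_mul_apply_J₃_eq hJ₁sq hJ₁₂ hJ₂₁ hJ₂sq hJ₃sq halt₂ hA X (e a)
  rw [e.sum_apply_J₁_J₂_eq hJ₁sq hJ₁₂ hJ₂₁ hJ₁iso, sub_self] at htwice
  linarith

theorem stmt_5
    {V : Type*} [NormedAddCommGroup V] [InnerProductSpace ℝ V]
    [FiniteDimensional ℝ V] {n : ℕ}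
    (hdim : Module.finrank ℝ V = 4 * n)
    (J₁ J₂ J₃ : V →ₗ[ℝ] V)
    (hJ₁iso : ∀ X Y : V, ⟪J₁ X, J₁ Y⟫ = ⟪X, Y⟫)
    (hJ₂iso : ∀ X Y : V, ⟪J₂ X, J₂ Y⟫ = ⟪X, Y⟫)
    (hJ₃iso : ∀ X Y : V, ⟪J₃ X, J₃ Y⟫ = ⟪X, Y⟫)
    (hJ₁sq : ∀ X : V, J₁ (J₁ X) = -X)
    (hJ₂sq : ∀ X : V, J₂ (J₂ X) = -X)
    (hJ₃sq : ∀ X : V, J₃ (J₃ X) = -X)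
    (hJ₁₂ : ∀ X : V, J₁ (J₂ X) = J₃ X)
    (hJ₂₁ : ∀ X : V, J₂ (J₁ X) = -(J₃ X))
    (T : V →ₗ[ℝ] V →ₗ[ℝ] V →ₗ[ℝ] ℝ)
    (halt₁ : ∀ X Y Z : V, T X Y Z = -(T Y X Z))
    (halt₂ : ∀ X Y Z : V, T X Y Z = -(T X Z Y))
    (htype₁ : ∀ X Y Z : V,
      T X Y Z - T (J₁ X) (J₁ Y) Z - T (J₁ X) Y (J₁ Z) - T X (J₁ Y) (J₁ Z) = 0)
    (htype₂ : ∀ X Y Z : V,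
      T X Y Z - T (J₂ X) (J₂ Y) Z - T (J₂ X) Y (J₂ Z) - T X (J₂ Y) (J₂ Z) = 0)
    (htype₃ : ∀ X Y Z : V,
      T X Y Z - T (J₃ X) (J₃ Y) Z - T (J₃ X) Y (J₃ Z) - T X (J₃ Y) (J₃ Z) = 0)
    (hmix₁ : ∀ X Y Z : V,
      T (J₁ X) (J₁ Y) Z - T (J₃ X) (J₃ Y) Z - T (J₃ X) (J₁ Y) (J₂ Z) - T (J₁ X) (J₃ Y) (J₂ Z) = 0)
    (hmix₂ : ∀ X Y Z : V,
      T (J₂ X) (J₂ Y) Z - T (J₁ X) (J₁ Y) Z - T (J₁ X) (J₂ Y) (J₃ Z) - T (J₂ X) (J₁ Y) (J₃ Z) = 0)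
    (hmix₃ : ∀ X Y Z : V,
      T (J₃ X) (J₃ Y) Z - T (J₂ X) (J₂ Y) Z - T (J₂ X) (J₃ Y) (J₁ Z) - T (J₃ X) (J₂ Y) (J₁ Z) = 0)
    (e : OrthonormalBasis (Fin (4 * n)) ℝ V)
    (A : V → V → V → ℝ)
    (hA : ∀ X Y Z : V,
      2 * A X Y Z =
        -(T X (J₁ Y) (J₁ Z)) - T (J₁ X) (J₁ Y) Z - T X (J₃ Y) (J₃ Z) - T (J₁ X) (J₃ Y) (J₂ Z))
    (X : V) :
    ∑ a, A X (e a) (J₃ (e a)) = 0 :=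
  stmt_5_general J₁ J₂ J₃ hJ₁iso hJ₁sq hJ₂sq hJ₃sq hJ₁₂ hJ₂₁ T halt₂ e A hA X
end

section
/- Let V be a finite-dimensional real inner product space, let J be a linear isometry of V with J∘J = −id, and let A : V×V×V → ℝ be a trilinear form satisfying A(X,JY,JZ) = A(X,Y,Z) for all X,Y,Z. Then for every orthonormal basis (e_a) of V and all X,Y ∈ V, ∑_{a,b} ( A(X,e_b,Je_a)·A(Y,e_a,e_b) − A(Y,e_b,Je_a)·A(X,e_a,e_b) ) = 0. -/
/-!
Since `J` is an isometry with `J² = -1`, it is skew-adjoint, so in a trace `∑ₐ` over an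
orthonormal basis it can be moved from one factor to the other at the cost of a sign; the
`J`-invariance of `A Y` in its last two slots turns that sign back, and relabelling the two
summation indices exhibits the first double sum as the second one.
-/

open scoped RealInnerProductSpace

section OrthonormalBasis

variable {V : Type*} [NormedAddCommGroup V] [InnerProductSpace ℝ V]
  {ι : Type*} [Fintype ι]

theorem OrthonormalBasis.sum_inner_mul_apply (e : OrthonormalBasis ι ℝ V) (f : V →ₗ[ℝ] ℝ)
    (x : V) : ∑ c, ⟪e c, x⟫ * f (e c) = f x := by
  conv_rhs => rw [← e.sum_repr' x]
  simp only [map_sum, map_smul, smul_eq_mul]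

theorem OrthonormalBasis.sum_apply_map_mul_apply (e : OrthonormalBasis ι ℝ V)
    {T S : V →ₗ[ℝ] V} (hTS : ∀ x y, ⟪T x, y⟫ = ⟪x, S y⟫) (f g : V →ₗ[ℝ] ℝ) :
    ∑ a, f (T (e a)) * g (e a) = ∑ a, f (e a) * g (S (e a)) := by
  calc ∑ a, f (T (e a)) * g (e a)
      = ∑ a, ∑ c, ⟪e c, T (e a)⟫ * f (e c) * g (e a) := by
        simp only [← Finset.sum_mul, e.sum_inner_mul_apply]
    _ = ∑ c, ∑ a, f (e c) * (⟪e a, S (e c)⟫ * g (e a)) := by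
        rw [Finset.sum_comm]
        refine Finset.sum_congr rfl fun c _ => Finset.sum_congr rfl fun a _ => ?_
        rw [real_inner_comm, hTS]
        ring
    _ = ∑ c, f (e c) * g (S (e c)) := by
        simp only [← Finset.mul_sum, e.sum_inner_mul_apply]

end OrthonormalBasis

section ComplexStructure

variable {V : Type*} [NormedAddCommGroup V] [InnerProductSpace ℝ V] {J : V →ₗ[ℝ] V}

theorem inner_apply_left_eq_inner_neg_apply_right (hJiso : ∀ X Y : V, ⟪J X, J Y⟫ = ⟪X, Y⟫)
    (hJsq : ∀ X : V, J (J X) = -X) (x y : V) : ⟪J x, y⟫ = ⟪x, (-J) y⟫ := by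
  have h := hJiso x (J y)
  rw [hJsq, inner_neg_right] at h
  rw [LinearMap.neg_apply, inner_neg_right, ← h, neg_neg]

theorem LinearMap.apply_map_left_eq_neg_apply_map_right (hJsq : ∀ X : V, J (J X) = -X)
    {C : V →ₗ[ℝ] V →ₗ[ℝ] ℝ} (hC : ∀ u v, C (J u) (J v) = C u v) (u v : V) :
    C (J u) v = -C u (J v) := by
  rw [← hC (J u), hJsq, map_neg, LinearMap.neg_apply]

variable {ι : Type*} [Fintype ι]

theorem sum_sum_apply_map_mul_comm (hJiso : ∀ X Y : V, ⟪J X, J Y⟫ = ⟪X, Y⟫)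
    (hJsq : ∀ X : V, J (J X) = -X) (e : OrthonormalBasis ι ℝ V)
    (B : V →ₗ[ℝ] V →ₗ[ℝ] ℝ) {C : V →ₗ[ℝ] V →ₗ[ℝ] ℝ} (hC : ∀ u v, C (J u) (J v) = C u v) :
    ∑ a, ∑ b, B (e b) (J (e a)) * C (e a) (e b) =
      ∑ a, ∑ b, C (e b) (J (e a)) * B (e a) (e b) := by
  have hskew := inner_apply_left_eq_inner_neg_apply_right hJiso hJsq
  calc ∑ a, ∑ b, B (e b) (J (e a)) * C (e a) (e b)
      = ∑ b, ∑ a, B (e b) (J (e a)) * C.flip (e b) (e a) := Finset.sum_comm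
    _ = ∑ b, ∑ a, B (e b) (e a) * C ((-J) (e a)) (e b) :=
        Finset.sum_congr rfl fun b _ => e.sum_apply_map_mul_apply hskew (B (e b)) (C.flip (e b))
    _ = ∑ b, ∑ a, C (e a) (J (e b)) * B (e b) (e a) := by
        simp only [LinearMap.neg_apply, map_neg,
          LinearMap.apply_map_left_eq_neg_apply_map_right hJsq hC, neg_neg, mul_comm]
    _ = ∑ a, ∑ b, C (e b) (J (e a)) * B (e a) (e b) := rfl

end ComplexStructure

theorem stmt_7_general
    {V : Type*} [NormedAddCommGroup V] [InnerProductSpace ℝ V]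
    (J : V →ₗ[ℝ] V)
    (hJiso : ∀ X Y : V, ⟪J X, J Y⟫ = ⟪X, Y⟫)
    (hJsq : ∀ X : V, J (J X) = -X)
    (A : V →ₗ[ℝ] V →ₗ[ℝ] V →ₗ[ℝ] ℝ)
    (hA : ∀ X Y Z : V, A X (J Y) (J Z) = A X Y Z)
    {ι : Type*} [Fintype ι]
    (e : OrthonormalBasis ι ℝ V) (X Y : V) :
    ∑ a, ∑ b,
      (A X (e b) (J (e a)) * A Y (e a) (e b) - A Y (e b) (J (e a)) * A X (e a) (e b)) = 0 := by
  simp only [Finset.sum_sub_distrib, sum_sum_apply_map_mul_comm hJiso hJsq e (A X) (hA Y),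
    sub_self]

theorem stmt_7
    {V : Type*} [NormedAddCommGroup V] [InnerProductSpace ℝ V]
    [FiniteDimensional ℝ V]
    (J : V →ₗ[ℝ] V)
    (hJiso : ∀ X Y : V, ⟪J X, J Y⟫ = ⟪X, Y⟫)
    (hJsq : ∀ X : V, J (J X) = -X)
    (A : V →ₗ[ℝ] V →ₗ[ℝ] V →ₗ[ℝ] ℝ)
    (hA : ∀ X Y Z : V, A X (J Y) (J Z) = A X Y Z)
    {ι : Type*} [Fintype ι]
    (e : OrthonormalBasis ι ℝ V) (X Y : V) :
    ∑ a, ∑ b,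
      (A X (e b) (J (e a)) * A Y (e a) (e b) - A Y (e b) (J (e a)) * A X (e a) (e b)) = 0 :=
  stmt_7_general J hJiso hJsq A hA e X Y
end
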